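/- arXiv:1403.2537 — 4 statements merged into one kernel-verified Lean document; each statement's English description precedes it below -/
import Mathlib

section
/- For every θ with 0 < θ ≤ π/2, the integral I₋(θ) = ∫₀^∞ (1/|μ − e^{2iθ}|) · |e^{iθ}/√μ − (e^{2iθ}+1)/(μ+1)| dμ is at most π. -/
open MeasureTheory Complex Real

private lemma pointwise_bound (θ μ : ℝ) (hθ1 : 0 < θ) (hθ2 : θ ≤ π / 2) (hμ : 0 < μ) :
    (1 / ‖(μ : ℂ) - Complex.exp (2 * θ * Complex.I)‖) *
      ‖Complex.exp (θ * Complex.I) / (Real.sqrt μ : ℂ)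
        - (Complex.exp (2 * θ * Complex.I) + 1) / ((μ : ℂ) + 1)‖
    ≤ 1 / (Real.sqrt μ * (μ + 1)) := by
  set s : ℝ := Real.sqrt μ with hsdef
  have hs : 0 < s := Real.sqrt_pos.mpr hμ
  set e : ℂ := Complex.exp (θ * Complex.I) with hedef
  have habse : ‖e‖ = 1 := by
    rw [hedef, Complex.norm_exp]
    simp
  have hIm : e.im = Real.sin θ := by
    rw [hedef, Complex.exp_ofReal_mul_I_im]
  have hRe : e.re = Real.cos θ := by
    rw [hedef, Complex.exp_ofReal_mul_I_re]
  have hsin : 0 < Real.sin θ := Real.sin_pos_of_pos_of_lt_pi hθ1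
    (lt_of_le_of_lt hθ2 (by linarith [Real.pi_pos]))
  have hcos : 0 ≤ Real.cos θ := Real.cos_nonneg_of_mem_Icc ⟨by linarith, hθ2⟩
  have hsm : (s:ℂ) - e ≠ 0 := by
    intro h
    have := congrArg Complex.im h
    simp [hIm] at this
    linarith
  have hsp : (s:ℂ) + e ≠ 0 := by
    intro h
    have := congrArg Complex.im h
    simp [hIm] at this
    linarith
  have he2 : Complex.exp (2 * θ * Complex.I) = e ^ 2 := by
    rw [hedef, ← Complex.exp_nat_mul]
    ring_nf
  have hsq : ((s:ℂ)) ^ 2 = (μ : ℂ) := by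
    rw [← Complex.ofReal_pow, hsdef, Real.sq_sqrt hμ.le]
  have hA : (μ : ℂ) - Complex.exp (2 * θ * Complex.I) = ((s:ℂ) - e) * ((s:ℂ) + e) := by
    rw [he2, ← hsq]; ring
  have hs0 : (s : ℂ) ≠ 0 := by exact_mod_cast hs.ne'
  have hμ1 : ((μ : ℂ) + 1) ≠ 0 := by
    intro h
    have := congrArg Complex.re h
    simp at this
    linarith
  have hB : e / (s:ℂ) - (Complex.exp (2 * θ * Complex.I) + 1) / ((μ : ℂ) + 1)
      = ((s:ℂ) - e) * (e * (s:ℂ) - 1) / ((s:ℂ) * ((μ : ℂ) + 1)) := by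
    have hd : ((s:ℂ)^2 + 1) ≠ 0 := by rw [hsq]; exact hμ1
    rw [he2, ← hsq, div_sub_div _ _ hs0 hd]
    congr 1
    ring
  have habs2 : ‖e * (s:ℂ) - 1‖ = ‖(s:ℂ) - e‖ := by
    have h1 : e * (s:ℂ) - 1 = e * ((s:ℂ) - starRingEnd ℂ e) := by
      rw [mul_sub]
      congr 1
      rw [Complex.mul_conj]
      norm_cast
      rw [← Complex.sq_norm, habse]; norm_num
    rw [h1, norm_mul, habse, one_mul,
      show (s:ℂ) - starRingEnd ℂ e = starRingEnd ℂ ((s:ℂ) - e) by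
        rw [map_sub, Complex.conj_ofReal],
      Complex.norm_conj]
  have key : ‖(s:ℂ) - e‖ ≤ ‖(s:ℂ) + e‖ := by
    rw [Complex.norm_def, Complex.norm_def]
    apply Real.sqrt_le_sqrt
    simp only [Complex.normSq_apply, Complex.sub_re, Complex.sub_im, Complex.add_re,
      Complex.add_im, Complex.ofReal_re, Complex.ofReal_im, hRe, hIm]
    nlinarith [mul_nonneg hs.le hcos]
  have ha : 0 < ‖(s:ℂ) - e‖ := by
    simpa using norm_pos_iff.mpr hsm
  have hb : 0 < ‖(s:ℂ) + e‖ := by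
    simpa using norm_pos_iff.mpr hsp
  have habsμ1 : ‖(μ:ℂ) + 1‖ = μ + 1 := by
    rw [show ((μ:ℂ) + 1) = ((μ + 1 : ℝ) : ℂ) by push_cast; ring, Complex.norm_real, Real.norm_eq_abs,
      _root_.abs_of_pos (by linarith)]
  have habss : ‖(s:ℂ)‖ = s := by
    rw [Complex.norm_real, Real.norm_eq_abs, _root_.abs_of_pos hs]
  rw [hA, hB, norm_div, norm_mul, norm_mul, norm_mul, habs2, habss, habsμ1]
  set a := ‖(s:ℂ) - e‖
  set b := ‖(s:ℂ) + e‖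
  calc 1 / (a * b) * (a * a / (s * (μ + 1)))
      = a / (b * (s * (μ + 1))) := by field_simp
    _ ≤ b / (b * (s * (μ + 1))) := by gcongr
    _ = 1 / (s * (μ + 1)) := by field_simp

private lemma bound_facts : IntegrableOn (fun μ : ℝ => 1 / (Real.sqrt μ * (μ + 1))) (Set.Ioi 0) ∧
    (∫ μ in Set.Ioi (0:ℝ), 1 / (Real.sqrt μ * (μ + 1))) = π := by
  set g : ℝ → ℝ := fun μ => 1 / (Real.sqrt μ * (μ + 1)) with hg
  have key : ∀ x ∈ Set.Ioi (0:ℝ),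
      (|(2:ℝ)| * x ^ ((2:ℝ) - 1)) • g (x ^ (2:ℝ)) = 2 * (1 + x^2)⁻¹ := by
    intro x hx
    have hx0 : (0:ℝ) < x := hx
    have h1 : x ^ ((2:ℝ)) = x ^ 2 := by
      rw [show ((2:ℝ)) = ((2:ℕ):ℝ) by norm_num, Real.rpow_natCast]
    have h2 : x ^ ((2:ℝ) - 1) = x := by
      norm_num
    have h3 : Real.sqrt (x ^ 2) = x := Real.sqrt_sq hx0.le
    simp only [hg, smul_eq_mul, h1, h2, h3]
    rw [_root_.abs_of_nonneg (by norm_num : (0:ℝ) ≤ 2)]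
    field_simp
    ring
  constructor
  · rw [← integrableOn_Ioi_comp_rpow_iff g (by norm_num : (2:ℝ) ≠ 0)]
    apply (integrableOn_congr_fun key measurableSet_Ioi).mpr
    exact (integrable_inv_one_add_sq.const_mul 2).integrableOn
  · rw [← integral_comp_rpow_Ioi g (by norm_num : (2:ℝ) ≠ 0),
      setIntegral_congr_fun measurableSet_Ioi key]
    rw [MeasureTheory.integral_const_mul, integral_Ioi_inv_one_add_sq]
    simp [Real.arctan_zero]
    ring

theorem integral_I_minus_le_pi (θ : ℝ) (hθ1 : 0 < θ) (hθ2 : θ ≤ π / 2) :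
    (∫ μ in Set.Ioi (0 : ℝ),
        (1 / ‖(μ : ℂ) - Complex.exp (2 * θ * Complex.I)‖) *
          ‖Complex.exp (θ * Complex.I) / (Real.sqrt μ : ℂ)
            - (Complex.exp (2 * θ * Complex.I) + 1) / ((μ : ℂ) + 1)‖) ≤ π := by
  obtain ⟨hint, hval⟩ := bound_facts
  calc (∫ μ in Set.Ioi (0 : ℝ),
        (1 / ‖(μ : ℂ) - Complex.exp (2 * θ * Complex.I)‖) *
          ‖Complex.exp (θ * Complex.I) / (Real.sqrt μ : ℂ)
            - (Complex.exp (2 * θ * Complex.I) + 1) / ((μ : ℂ) + 1)‖)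
      ≤ ∫ μ in Set.Ioi (0:ℝ), 1 / (Real.sqrt μ * (μ + 1)) := by
        apply integral_mono_of_nonneg
        · exact Filter.Eventually.of_forall fun μ => by positivity
        · exact hint
        · refine (ae_restrict_iff' measurableSet_Ioi).mpr
            (Filter.Eventually.of_forall fun μ hμ => ?_)
          exact pointwise_bound θ μ hθ1 hθ2 hμ
    _ = π := hval
end

section
/- For every θ with π/2 < θ < π, the integral I₊(θ) = ∫₀^∞ (1/|μ − e^{2iθ}|) · |e^{iθ}/√μ + (e^{2iθ}+1)/(μ+1)| dμ is at most π. -/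
open MeasureTheory Complex Real

lemma aux_integrable : IntegrableOn (fun y : ℝ => 1 / (Real.sqrt y * (y + 1))) (Set.Ioi 0) := by
  have hmeas : AEStronglyMeasurable (fun y : ℝ => 1 / (Real.sqrt y * (y + 1)))
      (volume.restrict (Set.Ioi (0:ℝ))) := by
    apply Measurable.aestronglyMeasurable
    exact measurable_const.div ((Real.continuous_sqrt.measurable).mul
      (measurable_id.add_const 1))
  have h1 : IntegrableOn (fun y : ℝ => 1 / (Real.sqrt y * (y + 1))) (Set.Ioc 0 1) := by
    have hb : IntegrableOn (fun y : ℝ => y ^ (-(1/2) : ℝ)) (Set.Ioc 0 1) := by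
      have := intervalIntegral.intervalIntegrable_rpow' (a := 0) (b := 1)
        (r := (-(1/2) : ℝ)) (by norm_num)
      rwa [intervalIntegrable_iff_integrableOn_Ioc_of_le (by norm_num)] at this
    refine hb.mono' (hmeas.mono_measure (Measure.restrict_mono Set.Ioc_subset_Ioi_self le_rfl)) ?_
    filter_upwards [ae_restrict_mem measurableSet_Ioc] with y hy
    have hy0 : 0 < y := hy.1
    have hs : 0 < Real.sqrt y := Real.sqrt_pos.mpr hy0
    rw [Real.norm_eq_abs, _root_.abs_of_nonneg (by positivity),
      Real.rpow_neg hy0.le, ← Real.sqrt_eq_rpow, ← one_div]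
    gcongr
    nlinarith
  have h2 : IntegrableOn (fun y : ℝ => 1 / (Real.sqrt y * (y + 1))) (Set.Ioi 1) := by
    have hb : IntegrableOn (fun y : ℝ => y ^ (-(3/2) : ℝ)) (Set.Ioi 1) :=
      integrableOn_Ioi_rpow_of_lt (by norm_num) one_pos
    refine hb.mono' (hmeas.mono_measure (Measure.restrict_mono (Set.Ioi_subset_Ioi
      zero_le_one) le_rfl)) ?_
    filter_upwards [ae_restrict_mem measurableSet_Ioi] with y hy
    have hy0 : (0:ℝ) < 1 := one_pos
    have hy1 : (1:ℝ) < y := hy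
    have hyp : (0:ℝ) < y := lt_trans one_pos hy
    have hs : 0 < Real.sqrt y := Real.sqrt_pos.mpr hyp
    rw [Real.norm_eq_abs, _root_.abs_of_nonneg (by positivity)]
    have key : y ^ ((3:ℝ)/2) ≤ Real.sqrt y * (y + 1) := by
      have : y ^ ((3:ℝ)/2) = Real.sqrt y * y := by
        rw [show (3:ℝ)/2 = 1/2 + 1 by norm_num, Real.rpow_add hyp, Real.rpow_one,
          Real.sqrt_eq_rpow]
      rw [this]
      nlinarith
    rw [Real.rpow_neg hyp.le, ← one_div]
    apply one_div_le_one_div_of_le (by positivity) key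
  have := (h1.union h2)
  rwa [Set.Ioc_union_Ioi_eq_Ioi (by norm_num)] at this

lemma aux_value : (∫ y in Set.Ioi (0:ℝ), 1 / (Real.sqrt y * (y + 1))) = π := by
  have h := integral_comp_rpow_Ioi_of_pos
    (g := fun y : ℝ => 1 / (Real.sqrt y * (y + 1))) (p := 2) two_pos
  rw [← h]
  have : ∀ x ∈ Set.Ioi (0:ℝ),
      ((2:ℝ) * x ^ ((2:ℝ) - 1)) • (1 / (Real.sqrt (x ^ (2:ℝ)) * (x ^ (2:ℝ) + 1)))
        = 2 * (1 + x ^ 2)⁻¹ := by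
    intro x hx
    have hx0 : 0 < x := hx
    have hx2 : x ^ (2:ℝ) = x ^ 2 := by
      rw [← Real.rpow_natCast x 2]; norm_num
    rw [hx2]
    have hsq : Real.sqrt (x ^ 2) = x := by
      rw [Real.sqrt_sq hx0.le]
    rw [hsq, smul_eq_mul]
    rw [show ((2:ℝ) - 1) = 1 by norm_num, Real.rpow_one]
    field_simp
    ring
  rw [setIntegral_congr_fun measurableSet_Ioi this, MeasureTheory.integral_const_mul,
    integral_Ioi_inv_one_add_sq]
  simp [Real.arctan_zero]
  ring

lemma aux_bound (θ : ℝ) (hcos : Real.cos θ ≤ 0) (μ : ℝ) (hμ : 0 < μ) :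
    (1 / ‖(μ : ℂ) - Complex.exp (2 * θ * Complex.I)‖) *
      ‖Complex.exp (θ * Complex.I) / (Real.sqrt μ : ℂ)
        + (Complex.exp (2 * θ * Complex.I) + 1) / ((μ : ℂ) + 1)‖
    ≤ 1 / (Real.sqrt μ * (μ + 1)) := by
  set s : ℝ := Real.sqrt μ with hs_def
  have hs : 0 < s := Real.sqrt_pos.mpr hμ
  set e : ℂ := Complex.exp (θ * Complex.I) with he_def
  have he2 : Complex.exp (2 * θ * Complex.I) = e ^ 2 := by
    rw [he_def, sq, ← Complex.exp_add]; ring_nf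
  have hsμ : ((s : ℂ))^2 = (μ : ℂ) := by
    have : s ^ 2 = μ := Real.sq_sqrt hμ.le
    push_cast [← this]; ring
  have hre : e.re = Real.cos θ := Complex.exp_ofReal_mul_I_re θ
  have him : e.im = Real.sin θ := Complex.exp_ofReal_mul_I_im θ
  have hsc : Real.sin θ ^ 2 + Real.cos θ ^ 2 = 1 := Real.sin_sq_add_cos_sq θ
  have hμ1 : (0:ℝ) < μ + 1 := by linarith
  have hse : (s : ℂ) ≠ 0 := by exact_mod_cast hs.ne'
  have hμ1c : ((μ : ℂ) + 1) ≠ 0 := by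
    rw [show ((μ:ℂ) + 1) = ((μ + 1 : ℝ) : ℂ) by push_cast; ring]
    exact_mod_cast hμ1.ne'
  have h1 : (μ : ℂ) - e ^ 2 = ((s:ℂ) - e) * ((s:ℂ) + e) := by rw [← hsμ]; ring
  have hd : ((s:ℂ)^2 + 1) ≠ 0 := by rw [hsμ]; exact hμ1c
  have h2 : e / (s : ℂ) + (e ^ 2 + 1) / ((μ : ℂ) + 1)
      = ((s:ℂ) + e) * ((s:ℂ) * e + 1) / ((s:ℂ) * ((μ:ℂ) + 1)) := by
    rw [← hsμ]
    field_simp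
    ring
  have hA : ‖(s:ℂ) * e + 1‖ = ‖(s:ℂ) + e‖ := by
    rw [Complex.norm_def, Complex.norm_def]
    congr 1
    simp only [Complex.normSq_apply, Complex.add_re, Complex.add_im, Complex.mul_re,
      Complex.mul_im, Complex.ofReal_re, Complex.ofReal_im, Complex.one_re, Complex.one_im,
      hre, him]
    linear_combination (s^2 - 1) * hsc
  have hle : ‖(s:ℂ) + e‖ ≤ ‖(s:ℂ) - e‖ := by
    rw [Complex.norm_def, Complex.norm_def]
    apply Real.sqrt_le_sqrt
    simp only [Complex.normSq_apply, Complex.add_re, Complex.add_im, Complex.sub_re,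
      Complex.sub_im, Complex.ofReal_re, Complex.ofReal_im, hre, him]
    nlinarith [mul_nonneg hs.le (neg_nonneg.mpr hcos)]
  have hB : 0 < ‖(s:ℂ) - e‖ := by
    rw [Complex.norm_def]
    apply Real.sqrt_pos.mpr
    simp only [Complex.normSq_apply, Complex.sub_re, Complex.sub_im, Complex.ofReal_re,
      Complex.ofReal_im, hre, him]
    nlinarith [mul_nonneg hs.le (neg_nonneg.mpr hcos)]
  have habsS : ‖((s:ℂ))‖ = s := by
    rw [Complex.norm_real, Real.norm_eq_abs]; exact _root_.abs_of_pos hs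
  have habsM : ‖(μ:ℂ) + 1‖ = μ + 1 := by
    rw [show ((μ:ℂ) + 1) = ((μ + 1 : ℝ) : ℂ) by push_cast; ring, Complex.norm_real, Real.norm_eq_abs]
    exact _root_.abs_of_pos hμ1
  rw [he2, h1, h2, norm_mul, norm_div, norm_mul, norm_mul, hA, habsS, habsM]
  set A := ‖(s:ℂ) + e‖ with hA_def
  set B := ‖(s:ℂ) - e‖ with hB_def
  have hAnn : 0 ≤ A := norm_nonneg _
  rcases eq_or_lt_of_le hAnn with hA0 | hA0
  · rw [← hA0]; simp; positivity
  · have key : 1 / (B * A) * (A * A / (s * (μ + 1))) = (A / B) * (1 / (s * (μ + 1))) := by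
      field_simp
    rw [key]
    calc (A / B) * (1 / (s * (μ + 1))) ≤ 1 * (1 / (s * (μ + 1))) := by
          apply mul_le_mul_of_nonneg_right ((div_le_one hB).mpr hle) (by positivity)
      _ = 1 / (s * (μ + 1)) := one_mul _

theorem integral_I_plus_le_pi (θ : ℝ) (hθ1 : π / 2 < θ) (hθ2 : θ < π) :
    (∫ μ in Set.Ioi (0 : ℝ),
        (1 / ‖(μ : ℂ) - Complex.exp (2 * θ * Complex.I)‖) *
          ‖Complex.exp (θ * Complex.I) / (Real.sqrt μ : ℂ)
            + (Complex.exp (2 * θ * Complex.I) + 1) / ((μ : ℂ) + 1)‖) ≤ π := by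
  have hcos : Real.cos θ ≤ 0 :=
    Real.cos_nonpos_of_pi_div_two_le_of_le hθ1.le (by linarith [Real.pi_pos])
  calc (∫ μ in Set.Ioi (0 : ℝ),
        (1 / ‖(μ : ℂ) - Complex.exp (2 * θ * Complex.I)‖) *
          ‖Complex.exp (θ * Complex.I) / (Real.sqrt μ : ℂ)
            + (Complex.exp (2 * θ * Complex.I) + 1) / ((μ : ℂ) + 1)‖)
      ≤ ∫ μ in Set.Ioi (0 : ℝ), 1 / (Real.sqrt μ * (μ + 1)) := by
        apply integral_mono_of_nonneg
        · filter_upwards with x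
          positivity
        · exact aux_integrable
        · filter_upwards [ae_restrict_mem measurableSet_Ioi] with x hx
          exact aux_bound θ hcos x hx
    _ = π := aux_value
end

section
/- Let H be a nonnegative injective selfadjoint operator on a Hilbert space and z a complex number with z² not in the spectrum of H. Then on a suitable dense domain, H^{−1/4}(√H − z)^{−1}H^{−1/4} = (I + z H^{−1/2})(H − z²)^{−1}, i.e. the operator (I + zH^{−1/2})(H − z²)^{−1} extends H^{−1/4}(√H − z)^{−1}H^{−1/4}. -/
open Complex ContinuousLinearMap

/-- For a nonnegative injective selfadjoint operator `H` (modelled here, together with its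
functional-calculus relatives `√H`, `H^{-1/4}`, `H^{-1/2}` and the resolvents
`Rz = (√H − z)⁻¹`, `Rz2 = (H − z²)⁻¹`, as bounded operators satisfying the defining
algebraic relations of the functional calculus), one has
`H^{-1/4}(√H − z)⁻¹H^{-1/4} = (I + z H^{-1/2})(H − z²)⁻¹`. -/
theorem quarter_power_resolvent_identity
    {E : Type*} [NormedAddCommGroup E] [InnerProductSpace ℂ E] [CompleteSpace E]
    (H sqrtH Hq Hh : E →L[ℂ] E) (z : ℂ)
    (hH : IsSelfAdjoint H) (hHpos : ∀ x : E, 0 ≤ (inner ℂ (H x) x : ℂ).re)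
    (hHinj : Function.Injective H)
    (hsqrt : sqrtH ∘L sqrtH = H)
    (hQq : Hq ∘L Hq = Hh)
    (hHh1 : Hh ∘L sqrtH = 1) (hHh2 : sqrtH ∘L Hh = 1)
    (Rz Rz2 : E →L[ℂ] E)
    (hRz1 : (sqrtH - z • (1 : E →L[ℂ] E)) ∘L Rz = 1)
    (hRz2 : Rz ∘L (sqrtH - z • (1 : E →L[ℂ] E)) = 1)
    (hRz21 : (H - z ^ 2 • (1 : E →L[ℂ] E)) ∘L Rz2 = 1)
    (hRz22 : Rz2 ∘L (H - z ^ 2 • (1 : E →L[ℂ] E)) = 1)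
    (hcomm1 : Commute Hq Rz) (hcomm2 : Commute Hh Rz2)
    (hcomm3 : Commute sqrtH Hq) :
    Hq ∘L Rz ∘L Hq = (1 + z • Hh) ∘L Rz2 := by
  simp only [← ContinuousLinearMap.mul_def] at *
  -- factorization (√H - z)(√H + z) = H - z²
  have hfac : (sqrtH - z • (1 : E →L[ℂ] E)) * (sqrtH + z • (1 : E →L[ℂ] E))
      = H - z ^ 2 • (1 : E →L[ℂ] E) := by
    rw [← hsqrt]
    simp only [mul_add, add_mul, sub_mul, smul_mul_assoc, mul_smul_comm, one_mul, mul_one]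
    rw [smul_sub, smul_smul, ← pow_two]
    ring_nf
    abel
  -- Rz = (√H + z) Rz2
  have hkey : Rz = (sqrtH + z • (1 : E →L[ℂ] E)) * Rz2 := by
    calc Rz = Rz * ((H - z ^ 2 • (1 : E →L[ℂ] E)) * Rz2) := by rw [hRz21, mul_one]
    _ = (Rz * (sqrtH - z • (1 : E →L[ℂ] E))) * ((sqrtH + z • (1 : E →L[ℂ] E)) * Rz2) := by
        rw [← hfac]; simp only [mul_assoc]
    _ = (sqrtH + z • (1 : E →L[ℂ] E)) * Rz2 := by rw [hRz2, one_mul]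
  calc Hq * (Rz * Hq) = Hq * (Hq * Rz) := by rw [hcomm1.eq]
  _ = Hh * Rz := by rw [← mul_assoc, hQq]
  _ = (Hh * sqrtH + z • Hh) * Rz2 := by
      rw [hkey, ← mul_assoc, mul_add, mul_smul_comm, mul_one]
  _ = (1 + z • Hh) * Rz2 := by rw [hHh1]
end

section
/- Let H be selfadjoint on H and A : H → H₁ densely defined closed. Suppose for every h₀ ∈ D(A*), every σ ∈ L²(ℝ⁺), and ε ∈ (0, ε₀), the function w(t) = ∫₀^t A e^{−i(t−s)H} A* σ(s) h₀ ds satisfies ‖e^{−εt} w‖_{L²(ℝ⁺;H₁)} ≤ 2a ‖e^{−εt}σ h₀‖_{L²(ℝ⁺;H₁)}. Then by Parseval and the Laplace transform representation w̃₊(λ+iε) = (1/i) A R(λ+iε) A* σ̃₊(λ+iε) h₀, one obtains the uniform resolvent bound sup_{λ∈ℝ} ‖A R(λ+iε) A* h₀‖ ≤ 2a‖h₀‖, i.e. A is H-supersmooth with constant 2a. -/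
open Complex MeasureTheory ContinuousLinearMap

noncomputable instance ratNormedAlgebraCLM {E : Type*} [NormedAddCommGroup E] [NormedSpace ℂ E] :
    NormedAlgebra ℚ (E →L[ℂ] E) :=
  NormedAlgebra.restrictScalars ℚ ℂ _

private lemma normExpSkew {E : Type*} [NormedAddCommGroup E] [InnerProductSpace ℂ E]
    [CompleteSpace E] (H : E →L[ℂ] E) (hH : IsSelfAdjoint H) (t : ℝ) (v : E) :
    ‖NormedSpace.exp ((-(Complex.I * (t:ℂ))) • H) v‖ ≤ ‖v‖ := by
  rcases subsingleton_or_nontrivial E with hE | hE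
  · simp [Subsingleton.elim v 0]
  have hnt : Nontrivial (E →L[ℂ] E) := by
    refine ⟨1, 0, fun hcon => ?_⟩
    obtain ⟨x, hx⟩ := exists_ne (0 : E)
    exact hx (by simpa using ContinuousLinearMap.ext_iff.mp hcon x)
  have hskew : (-(Complex.I * (t:ℂ))) • H ∈ skewAdjoint (E →L[ℂ] E) := by
    rw [skewAdjoint.mem_iff, star_smul, hH.star_eq, ← neg_smul]
    congr 1
    simp [Complex.ext_iff]
  have hmem := NormedSpace.exp_mem_unitary_of_mem_skewAdjoint hskew
  have h1 : ‖NormedSpace.exp ((-(Complex.I * (t:ℂ))) • H)‖ = 1 :=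
    CStarRing.norm_of_mem_unitary hmem
  calc ‖NormedSpace.exp ((-(Complex.I * (t:ℂ))) • H) v‖
      ≤ ‖NormedSpace.exp ((-(Complex.I * (t:ℂ))) • H)‖ * ‖v‖ := le_opNorm _ _
    _ = ‖v‖ := by rw [h1, one_mul]

private lemma ftcExp {E : Type*} [NormedAddCommGroup E] [NormedSpace ℂ E] [CompleteSpace E]
    (M P : E →L[ℂ] E) (hPM : P ∘L M = 1) (u : E) (r : ℝ) :
    (∫ s in (0:ℝ)..r, NormedSpace.exp ((s:ℂ) • M) u) =
      P (NormedSpace.exp ((r:ℂ) • M) u - u) := by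
  have hderiv : ∀ s : ℝ, HasDerivAt (fun s' : ℝ => P (NormedSpace.exp (((s':ℝ):ℂ) • M) u))
      (NormedSpace.exp ((s:ℂ) • M) u) s := by
    intro s
    have h1 : HasDerivAt (fun ζ : ℂ => NormedSpace.exp (ζ • M))
        (M * NormedSpace.exp ((s:ℂ) • M)) (s:ℂ) := hasDerivAt_exp_smul_const' M (s:ℂ)
    have h2 := h1.clm_apply (hasDerivAt_const ((s:ℂ)) u)
    simp only [map_zero, smul_zero, add_zero] at h2
    have h3 := P.hasFDerivAt.comp_hasDerivAt ((s:ℂ)) h2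
    have h4 := h3.scomp s Complex.ofRealCLM.hasDerivAt
    simp only [Function.comp_def, Complex.ofRealCLM_apply, ContinuousLinearMap.mul_apply] at h4
    have h5 : P (M (NormedSpace.exp ((s:ℂ) • M) u)) = NormedSpace.exp ((s:ℂ) • M) u := by
      have : P (M (NormedSpace.exp ((s:ℂ) • M) u)) =
          (P ∘L M) (NormedSpace.exp ((s:ℂ) • M) u) := rfl
      rw [this, hPM, ContinuousLinearMap.one_apply]
    rw [h5] at h4
    simpa using h4
  have hcont : Continuous fun s : ℝ => NormedSpace.exp ((s:ℂ) • M) u := by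
    apply Continuous.clm_apply _ continuous_const
    exact NormedSpace.exp_continuous.comp (Complex.continuous_ofReal.smul continuous_const)
  have hint := intervalIntegral.integral_eq_sub_of_hasDerivAt
    (f := fun s' : ℝ => P (NormedSpace.exp (((s':ℝ):ℂ) • M) u))
    (fun s _ => hderiv s) (hcont.intervalIntegrable 0 r)
  rw [hint, map_sub]
  simp

set_option maxHeartbeats 1000000 in
/-- Converse direction of the abstract supersmoothing theorem: if for every `h₀ ∈ H₁` and
every `σ ∈ L²(ℝ⁺)` the Duhamel quantity `w(t) = ∫₀^t A e^{−i(t−s)H} A* σ(s) h₀ ds`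
satisfies `‖e^{−εt} w‖_{L²(ℝ⁺;H₁)} ≤ 2a ‖e^{−εt} σ h₀‖_{L²(ℝ⁺;H₁)}` for `0 < ε < ε₀`,
then `A` is `H`-supersmooth with constant `2a`:
`‖A R(λ+iε) A* h₀‖ ≤ 2a ‖h₀‖` uniformly in `λ ∈ ℝ`, `0 < ε < ε₀`. -/
theorem nonhomogeneous_estimate_implies_supersmooth
    {E E₁ : Type*} [NormedAddCommGroup E] [InnerProductSpace ℂ E] [CompleteSpace E]
    [NormedAddCommGroup E₁] [InnerProductSpace ℂ E₁] [CompleteSpace E₁]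
    (H : E →L[ℂ] E) (hH : IsSelfAdjoint H)
    (R : ℂ → (E →L[ℂ] E))
    (hR1 : ∀ z : ℂ, z.im ≠ 0 → (H - z • (1 : E →L[ℂ] E)) ∘L R z = 1)
    (hR2 : ∀ z : ℂ, z.im ≠ 0 → R z ∘L (H - z • (1 : E →L[ℂ] E)) = 1)
    (Astar : E₁ →L[ℂ] E) (a ε₀ : ℝ) (ha : 0 ≤ a) (hε₀ : 0 < ε₀)
    (hyp : ∀ (h₀ : E₁) (σ : ℝ → ℂ),
      MemLp σ 2 (volume.restrict (Set.Ioi (0 : ℝ))) →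
      ∀ ε : ℝ, 0 < ε → ε < ε₀ →
        (∫ t in Set.Ioi (0 : ℝ),
            Real.exp (-2 * ε * t) *
              ‖∫ s in (0 : ℝ)..t,
                  σ s • (Astar.adjoint
                    ((NormedSpace.exp ((-(Complex.I * ((t : ℂ) - (s : ℂ)))) • H))
                      (Astar h₀)))‖ ^ 2)
          ≤ (2 * a) ^ 2 *
              ∫ t in Set.Ioi (0 : ℝ),
                Real.exp (-2 * ε * t) * ‖σ t‖ ^ 2 * ‖h₀‖ ^ 2) :
    ∀ (lam ε : ℝ), 0 < ε → ε < ε₀ → ∀ h₀ : E₁,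
      ‖Astar.adjoint (R ((lam : ℂ) + (ε : ℂ) * Complex.I) (Astar h₀))‖
        ≤ 2 * a * ‖h₀‖ := by
  intro lam ε hε hεε₀ h₀
  rcases subsingleton_or_nontrivial E with hE | hE
  · rw [Subsingleton.elim (R ((lam : ℂ) + (ε : ℂ) * Complex.I) (Astar h₀)) 0, map_zero,
      norm_zero]
    positivity
  set z : ℂ := (lam : ℂ) + (ε : ℂ) * Complex.I with hzdef
  have hzim : z.im ≠ 0 := by
    have : z.im = ε := by simp [hzdef]
    rw [this]; exact ne_of_gt hε
  set c : ℂ := (ε : ℂ) - Complex.I * (lam : ℂ) with hcdef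
  set M : E →L[ℂ] E := Complex.I • H + c • (1 : E →L[ℂ] E) with hMdef
  set P : E →L[ℂ] E := (-Complex.I) • R z with hPdef
  have hc : c = -(Complex.I * z) := by
    rw [hcdef, hzdef]
    have : Complex.I * Complex.I = -1 := Complex.I_mul_I
    ring_nf
    rw [Complex.I_sq]
    ring
  have hMeq : M = Complex.I • (H - z • (1 : E →L[ℂ] E)) := by
    rw [hMdef, hc, smul_sub, smul_smul, neg_smul, ← sub_eq_add_neg]
  have hPM : P ∘L M = 1 := by
    rw [hPdef, hMeq, smul_comp, comp_smul, smul_smul, hR2 z hzim]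
    rw [neg_mul, Complex.I_mul_I, neg_neg, one_smul]
  have hHR : H ∘L R z = R z ∘L H := by
    have h1 := hR1 z hzim
    have h2 := hR2 z hzim
    simp only [sub_comp, comp_sub, smul_comp, comp_smul, ContinuousLinearMap.one_def,
      ContinuousLinearMap.id_comp, ContinuousLinearMap.comp_id] at h1 h2
    exact sub_left_inj.mp (h1.trans h2.symm)
  have hcommH : Commute H (R z) := by
    show H * R z = R z * H
    rw [ContinuousLinearMap.mul_def, ContinuousLinearMap.mul_def]
    exact hHR
  have hexpRz : ∀ (x : ℂ) (v : E),
      NormedSpace.exp (x • H) (R z v) = R z (NormedSpace.exp (x • H) v) := by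
    intro x v
    have hcomm : Commute (NormedSpace.exp (x • H)) (R z) := (hcommH.smul_left x).exp_left
    calc NormedSpace.exp (x • H) (R z v)
        = (NormedSpace.exp (x • H) * R z) v := (ContinuousLinearMap.mul_apply _ _ _).symm
      _ = (R z * NormedSpace.exp (x • H)) v := by rw [hcomm.eq]
      _ = _ := ContinuousLinearMap.mul_apply _ _ _
  have hsplit : ∀ t s : ℝ, NormedSpace.exp ((-(Complex.I * ((t : ℂ) - (s : ℂ)))) • H)
      = NormedSpace.exp ((-(Complex.I * (t:ℂ))) • H) *
        NormedSpace.exp ((Complex.I * (s:ℂ)) • H) := by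
    intro t s
    rw [← NormedSpace.exp_add_of_commute (((Commute.refl H).smul_left _).smul_right _),
      ← add_smul]
    congr 2
    ring
  have hUnit : ∀ t : ℝ, NormedSpace.exp ((-(Complex.I * (t:ℂ))) • H) *
      NormedSpace.exp ((Complex.I * (t:ℂ)) • H) = 1 := by
    intro t
    rw [← NormedSpace.exp_add_of_commute (((Commute.refl H).smul_left _).smul_right _),
      ← add_smul, neg_add_cancel, zero_smul, NormedSpace.exp_zero]
  have hexpsM : ∀ s : ℝ, NormedSpace.exp ((s:ℂ) • M)
      = Complex.exp (c * s) • NormedSpace.exp ((Complex.I * (s:ℂ)) • H) := by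
    intro s
    have h1 : ((s:ℂ)) • M = (Complex.I * (s:ℂ)) • H + (c * (s:ℂ)) • (1 : E →L[ℂ] E) := by
      rw [hMdef, smul_add, smul_smul, smul_smul, mul_comm ((s:ℂ)) Complex.I,
        mul_comm ((s:ℂ)) c]
    rw [h1, NormedSpace.exp_add_of_commute (((Commute.one_right H).smul_left _).smul_right _)]
    have h2 : ((c * (s:ℂ))) • (1 : E →L[ℂ] E) = algebraMap ℂ (E →L[ℂ] E) (c * s) :=
      (Algebra.algebraMap_eq_smul_one _).symm
    rw [h2, ← NormedSpace.algebraMap_exp_comm, Algebra.algebraMap_eq_smul_one,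
      ← Complex.exp_eq_exp_ℂ, mul_smul_comm, mul_one]
  set N : ℝ := ‖Astar.adjoint (R z (Astar h₀))‖ with hNdef
  set C₁ : ℝ := ‖Astar.adjoint‖ * ‖R z (Astar h₀)‖ with hC1def
  have hN0 : 0 ≤ N := norm_nonneg _
  have hC10 : 0 ≤ C₁ := by positivity
  have key : ∀ T : ℝ, 0 < T → N^2 * T ≤ (2*a)^2 * (‖h₀‖^2 * T) + 2*N*C₁ * (1/ε) := by
    intro T hT
    set f : ℝ → ℂ := fun s => Complex.exp (c * s) with hfdef
    set σ : ℝ → ℂ := Set.indicator (Set.Ioc (0:ℝ) T) f with hσdef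
    have hf_cont : Continuous f := by
      rw [hfdef]
      exact Complex.continuous_exp.comp (continuous_const.mul Complex.continuous_ofReal)
    have hre : ∀ s : ℝ, (c * (s:ℂ)).re = ε * s := by
      intro s
      rw [hcdef]
      simp [Complex.mul_re]
    have hσmem : MemLp σ 2 (volume.restrict (Set.Ioi (0:ℝ))) := by
      rw [hσdef, memLp_indicator_iff_restrict measurableSet_Ioc,
        Measure.restrict_restrict measurableSet_Ioc,
        Set.inter_eq_left.mpr Set.Ioc_subset_Ioi_self]
      haveI : IsFiniteMeasure (volume.restrict (Set.Ioc (0:ℝ) T)) := by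
        constructor
        rw [Measure.restrict_apply_univ]
        exact measure_Ioc_lt_top
      refine MemLp.of_bound hf_cont.aestronglyMeasurable (Real.exp (|ε| * |T|)) ?_
      refine (ae_restrict_iff' measurableSet_Ioc).2 (ae_of_all _ fun s hs => ?_)
      rw [hfdef]
      rw [Complex.norm_exp, hre s]
      apply Real.exp_le_exp.2
      calc ε * s ≤ |ε * s| := le_abs_self _
        _ = |ε| * |s| := abs_mul _ _
        _ ≤ |ε| * |T| := by
            apply mul_le_mul_of_nonneg_left _ (abs_nonneg _)
            rw [abs_of_pos hs.1, abs_of_pos hT]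
            exact hs.2
    have hg_cont : ∀ t : ℝ, Continuous fun s : ℝ => f s •
        (Astar.adjoint (NormedSpace.exp ((-(Complex.I * ((t:ℂ) - (s:ℂ)))) • H) (Astar h₀))) := by
      intro t
      apply hf_cont.smul
      apply Astar.adjoint.continuous.comp
      apply Continuous.clm_apply _ continuous_const
      exact NormedSpace.exp_continuous.comp
        (((continuous_const.mul (continuous_const.sub Complex.continuous_ofReal)).neg).smul
          continuous_const)
    have hind : ∀ t s : ℝ,
        σ s • (Astar.adjoint (NormedSpace.exp ((-(Complex.I * ((t:ℂ) - (s:ℂ)))) • H) (Astar h₀)))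
          = Set.indicator (Set.Ioc (0:ℝ) T) (fun s' => f s' •
            (Astar.adjoint (NormedSpace.exp ((-(Complex.I * ((t:ℂ) - (s':ℂ)))) • H)
              (Astar h₀)))) s := by
      intro t s
      by_cases hs : s ∈ Set.Ioc (0:ℝ) T
      · rw [hσdef, Set.indicator_of_mem hs, Set.indicator_of_mem hs]
      · rw [hσdef, Set.indicator_of_notMem hs, Set.indicator_of_notMem hs, zero_smul]
    have hInt : ∀ t a' b' : ℝ, IntervalIntegrable (fun s => σ s •
        (Astar.adjoint (NormedSpace.exp ((-(Complex.I * ((t:ℂ) - (s:ℂ)))) • H) (Astar h₀))))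
        volume a' b' := by
      intro t a' b'
      have h1 : IntervalIntegrable (fun s : ℝ => f s •
          (Astar.adjoint (NormedSpace.exp ((-(Complex.I * ((t:ℂ) - (s:ℂ)))) • H) (Astar h₀))))
          volume a' b' := (hg_cont t).intervalIntegrable a' b'
      rw [intervalIntegrable_iff] at h1 ⊢
      exact (h1.indicator measurableSet_Ioc).congr (ae_of_all _ fun s => (hind t s).symm)
    set Φ : ℝ → E₁ := fun t => Astar.adjoint ((NormedSpace.exp ((-(Complex.I * (t:ℂ))) • H))
      (P (NormedSpace.exp (((min t T : ℝ):ℂ) • M) (Astar h₀) - Astar h₀))) with hΦdef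
    have hcont_sM : Continuous fun s : ℝ => NormedSpace.exp ((s:ℂ) • M) (Astar h₀) := by
      apply Continuous.clm_apply _ continuous_const
      exact NormedSpace.exp_continuous.comp (Complex.continuous_ofReal.smul continuous_const)
    have hw : ∀ t : ℝ, 0 < t → (∫ s in (0:ℝ)..t, σ s •
        (Astar.adjoint (NormedSpace.exp ((-(Complex.I * ((t:ℂ) - (s:ℂ)))) • H) (Astar h₀))))
        = Φ t := by
      intro t ht
      have h1 : (∫ s in (0:ℝ)..t, σ s •
          (Astar.adjoint (NormedSpace.exp ((-(Complex.I * ((t:ℂ) - (s:ℂ)))) • H) (Astar h₀))))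
          = ∫ s in (0:ℝ)..(min t T), f s •
            (Astar.adjoint (NormedSpace.exp ((-(Complex.I * ((t:ℂ) - (s:ℂ)))) • H)
              (Astar h₀))) := by
        rcases le_total t T with h | h
        · rw [min_eq_left h]
          refine intervalIntegral.integral_congr_ae (ae_of_all _ fun s hs => ?_)
          rw [Set.uIoc_of_le ht.le] at hs
          rw [hσdef, Set.indicator_of_mem (Set.mem_of_mem_of_subset hs (Set.Ioc_subset_Ioc_right h))]
        · rw [min_eq_right h]
          rw [← intervalIntegral.integral_add_adjacent_intervals (hInt t 0 T) (hInt t T t)]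
          have h0 : (∫ s in T..t, σ s •
              (Astar.adjoint (NormedSpace.exp ((-(Complex.I * ((t:ℂ) - (s:ℂ)))) • H)
                (Astar h₀)))) = ∫ s in T..t, (0:E₁) := by
            refine intervalIntegral.integral_congr_ae (ae_of_all _ fun s hs => ?_)
            rw [Set.uIoc_of_le h] at hs
            rw [hσdef, Set.indicator_of_notMem (fun hmem => absurd hmem.2 (not_le.2 hs.1)),
              zero_smul]
          rw [h0, intervalIntegral.integral_zero, add_zero]
          refine intervalIntegral.integral_congr_ae (ae_of_all _ fun s hs => ?_)
          rw [Set.uIoc_of_le hT.le] at hs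
          rw [hσdef, Set.indicator_of_mem hs]
      have h2 : ∀ s : ℝ, f s •
          (Astar.adjoint (NormedSpace.exp ((-(Complex.I * ((t:ℂ) - (s:ℂ)))) • H) (Astar h₀)))
          = (Astar.adjoint ∘L NormedSpace.exp ((-(Complex.I * (t:ℂ))) • H))
              (NormedSpace.exp ((s:ℂ) • M) (Astar h₀)) := by
        intro s
        rw [ContinuousLinearMap.comp_apply, hexpsM s, ContinuousLinearMap.smul_apply,
          _root_.map_smul, _root_.map_smul, hsplit t s, ContinuousLinearMap.mul_apply]
      rw [h1]
      simp only [h2]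
      have hIsM : IntervalIntegrable (fun s : ℝ => NormedSpace.exp ((s:ℂ) • M) (Astar h₀))
          volume 0 (min t T) := hcont_sM.intervalIntegrable _ _
      rw [ContinuousLinearMap.intervalIntegral_comp_comm _ hIsM,
        ftcExp M P hPM (Astar h₀) (min t T)]
      rfl
    have hlow : ∀ t ∈ Set.Ioc (0:ℝ) T, Real.exp (ε*t) * N - C₁ ≤ ‖Φ t‖ := by
      intro t ht
      have hmin : min t T = t := min_eq_left ht.2
      have e1 : NormedSpace.exp ((t:ℂ) • M) (Astar h₀)
          = Complex.exp (c*(t:ℂ)) • (NormedSpace.exp ((Complex.I * (t:ℂ)) • H) (Astar h₀)) := by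
        rw [hexpsM t]; rfl
      have e3 : NormedSpace.exp ((-(Complex.I * (t:ℂ))) • H)
          (R z (NormedSpace.exp ((Complex.I * (t:ℂ)) • H) (Astar h₀))) = R z (Astar h₀) := by
        rw [hexpRz]
        congr 1
        rw [← ContinuousLinearMap.mul_apply, hUnit t, ContinuousLinearMap.one_apply]
      have hform : Φ t = (Complex.exp (c*(t:ℂ)) * (-Complex.I)) •
            (Astar.adjoint (R z (Astar h₀)))
          - (-Complex.I) • (Astar.adjoint (NormedSpace.exp ((-(Complex.I * (t:ℂ))) • H)
            (R z (Astar h₀)))) := by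
        show Astar.adjoint ((NormedSpace.exp ((-(Complex.I * (t:ℂ))) • H))
            (P (NormedSpace.exp (((min t T : ℝ):ℂ) • M) (Astar h₀) - Astar h₀))) = _
        rw [hmin, e1, hPdef]
        simp only [map_sub, _root_.map_smul, ContinuousLinearMap.smul_apply, smul_smul]
        rw [e3]
      have hb := norm_sub_norm_le
        ((Complex.exp (c*(t:ℂ)) * (-Complex.I)) • (Astar.adjoint (R z (Astar h₀))))
        ((-Complex.I) • (Astar.adjoint (NormedSpace.exp ((-(Complex.I * (t:ℂ))) • H)
          (R z (Astar h₀)))))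
      rw [← hform] at hb
      have hn1 : ‖(Complex.exp (c*(t:ℂ)) * (-Complex.I)) • (Astar.adjoint (R z (Astar h₀)))‖
          = Real.exp (ε*t) * N := by
        rw [norm_smul, norm_mul]
        rw [Complex.norm_exp, hre t]
        simp [hNdef]
      have hn2 : ‖(-Complex.I) • (Astar.adjoint (NormedSpace.exp ((-(Complex.I * (t:ℂ))) • H)
          (R z (Astar h₀))))‖ ≤ C₁ := by
        rw [norm_smul]
        have : ‖-Complex.I‖ = 1 := by simp
        rw [this, one_mul, hC1def]
        calc ‖Astar.adjoint (NormedSpace.exp ((-(Complex.I * (t:ℂ))) • H) (R z (Astar h₀)))‖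
            ≤ ‖Astar.adjoint‖ * ‖NormedSpace.exp ((-(Complex.I * (t:ℂ))) • H)
              (R z (Astar h₀))‖ := le_opNorm _ _
          _ ≤ ‖Astar.adjoint‖ * ‖R z (Astar h₀)‖ := by
              exact mul_le_mul_of_nonneg_left (normExpSkew H hH t _) (norm_nonneg _)
      linarith [hb, hn1.symm.le, hn2]
    obtain ⟨K, hK⟩ := (isCompact_Icc (a := (0:ℝ)) (b := T)).exists_bound_of_continuousOn
      (Continuous.continuousOn (show Continuous fun r : ℝ =>
        P (NormedSpace.exp ((r:ℂ) • M) (Astar h₀) - Astar h₀) from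
        P.continuous.comp ((Continuous.clm_apply (NormedSpace.exp_continuous.comp
          (Complex.continuous_ofReal.smul continuous_const)) continuous_const).sub
          continuous_const)))
    have hK0 : 0 ≤ K := le_trans (norm_nonneg _) (hK 0 ⟨le_refl _, hT.le⟩)
    have hΦbnd : ∀ t : ℝ, 0 < t → ‖Φ t‖ ≤ ‖Astar.adjoint‖ * K := by
      intro t ht
      rw [hΦdef]
      calc ‖Astar.adjoint ((NormedSpace.exp ((-(Complex.I * (t:ℂ))) • H))
            (P (NormedSpace.exp (((min t T : ℝ):ℂ) • M) (Astar h₀) - Astar h₀)))‖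
          ≤ ‖Astar.adjoint‖ * ‖(NormedSpace.exp ((-(Complex.I * (t:ℂ))) • H))
            (P (NormedSpace.exp (((min t T : ℝ):ℂ) • M) (Astar h₀) - Astar h₀))‖ :=
            le_opNorm _ _
        _ ≤ ‖Astar.adjoint‖ * ‖P (NormedSpace.exp (((min t T : ℝ):ℂ) • M) (Astar h₀)
            - Astar h₀)‖ := mul_le_mul_of_nonneg_left (normExpSkew H hH t _) (norm_nonneg _)
        _ ≤ ‖Astar.adjoint‖ * K := mul_le_mul_of_nonneg_left
            (hK (min t T) ⟨le_min ht.le hT.le, min_le_right _ _⟩) (norm_nonneg _)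
    have hΦcont : Continuous Φ := by
      rw [hΦdef]
      apply Continuous.comp Astar.adjoint.continuous
      apply Continuous.clm_apply
      · exact NormedSpace.exp_continuous.comp
          ((continuous_const.mul Complex.continuous_ofReal).neg.smul continuous_const)
      · apply P.continuous.comp
        apply Continuous.sub _ continuous_const
        apply Continuous.clm_apply _ continuous_const
        exact NormedSpace.exp_continuous.comp
          ((Complex.continuous_ofReal.comp ((continuous_id.min continuous_const))).smul
            continuous_const)
    have hGcont : Continuous fun t : ℝ => Real.exp (-2*ε*t) * ‖Φ t‖^2 := by
      apply Continuous.mul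
      · exact Real.continuous_exp.comp (continuous_const.mul continuous_id)
      · exact (hΦcont.norm).pow 2
    have hGint : IntegrableOn (fun t : ℝ => Real.exp (-2*ε*t) * ‖Φ t‖^2) (Set.Ioi (0:ℝ)) := by
      have hdom : IntegrableOn (fun t : ℝ => (‖Astar.adjoint‖*K)^2 * Real.exp (-(2*ε) * t))
          (Set.Ioi (0:ℝ)) := (exp_neg_integrableOn_Ioi 0 (by positivity)).const_mul _
      refine Integrable.mono' hdom (hGcont.aestronglyMeasurable.restrict) ?_
      refine (ae_restrict_iff' measurableSet_Ioi).2 (ae_of_all _ fun t ht => ?_)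
      have hnn : (0:ℝ) ≤ Real.exp (-2*ε*t) * ‖Φ t‖^2 := by positivity
      rw [Real.norm_eq_abs, _root_.abs_of_nonneg hnn]
      have h1 := hΦbnd t ht
      have h2 : Real.exp (-2*ε*t) = Real.exp (-(2*ε)*t) := by ring_nf
      rw [h2]
      have h3 : ‖Φ t‖^2 ≤ (‖Astar.adjoint‖*K)^2 := by
        apply pow_le_pow_left₀ (norm_nonneg _) h1
      nlinarith [Real.exp_pos (-(2*ε)*t)]
    have hmain := hyp h₀ σ hσmem ε hε hεε₀
    rw [setIntegral_congr_fun measurableSet_Ioi (fun t ht => by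
      simp only [hw t ht] : Set.EqOn (fun t : ℝ => Real.exp (-2 * ε * t) *
        ‖∫ s in (0:ℝ)..t, σ s • (Astar.adjoint
          ((NormedSpace.exp ((-(Complex.I * ((t : ℂ) - (s : ℂ)))) • H)) (Astar h₀)))‖ ^ 2)
        (fun t : ℝ => Real.exp (-2*ε*t) * ‖Φ t‖^2) (Set.Ioi (0:ℝ)))] at hmain
    have hRHS : (∫ t in Set.Ioi (0:ℝ), Real.exp (-2 * ε * t) * ‖σ t‖ ^ 2 * ‖h₀‖ ^ 2)
        = ‖h₀‖^2 * T := by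
      have hpt : ∀ t : ℝ, Real.exp (-2 * ε * t) * ‖σ t‖ ^ 2 * ‖h₀‖ ^ 2
          = Set.indicator (Set.Ioc (0:ℝ) T) (fun _ => ‖h₀‖^2) t := by
        intro t
        by_cases hmem : t ∈ Set.Ioc (0:ℝ) T
        · rw [Set.indicator_of_mem hmem, hσdef, Set.indicator_of_mem hmem, hfdef]
          rw [Complex.norm_exp, hre t]
          rw [sq (Real.exp (ε*t)), ← Real.exp_add, ← Real.exp_add]
          have : -2 * ε * t + (ε * t + ε * t) = 0 := by ring
          rw [this, Real.exp_zero, one_mul]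
        · rw [Set.indicator_of_notMem hmem, hσdef, Set.indicator_of_notMem hmem]
          simp
      rw [setIntegral_congr_fun measurableSet_Ioi (fun t _ => hpt t),
        setIntegral_indicator measurableSet_Ioc,
        Set.inter_eq_self_of_subset_right Set.Ioc_subset_Ioi_self,
        setIntegral_const, measureReal_def, Real.volume_Ioc, sub_zero, ENNReal.toReal_ofReal hT.le,
        smul_eq_mul, mul_comm]
    rw [hRHS] at hmain
    have hchain1 : (∫ t in Set.Ioc (0:ℝ) T, Real.exp (-2*ε*t) * ‖Φ t‖^2)
        ≤ ∫ t in Set.Ioi (0:ℝ), Real.exp (-2*ε*t) * ‖Φ t‖^2 :=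
      setIntegral_mono_set hGint (ae_of_all _ fun t => by positivity)
        (HasSubset.Subset.eventuallyLE Set.Ioc_subset_Ioi_self)
    have hchain2 : (∫ t in Set.Ioc (0:ℝ) T, (N^2 - (2*N*C₁) * Real.exp (-ε*t)))
        ≤ ∫ t in Set.Ioc (0:ℝ) T, Real.exp (-2*ε*t) * ‖Φ t‖^2 := by
      refine setIntegral_mono_on ?_ (hGint.mono_set Set.Ioc_subset_Ioi_self)
        measurableSet_Ioc ?_
      · apply Integrable.sub
        · exact integrableOn_const measure_Ioc_lt_top.ne
        · exact (Continuous.integrableOn_Ioc (Real.continuous_exp.comp (continuous_const.mul continuous_id))).const_mul _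
      · intro t ht
        have hmul : Real.exp (-ε*t) * Real.exp (ε*t) = 1 := by
          rw [← Real.exp_add]; norm_num
        have hlow' := hlow t ht
        have hp := Real.exp_pos (-ε*t)
        have hx : N - C₁ * Real.exp (-ε*t) ≤ Real.exp (-ε*t) * ‖Φ t‖ := by
          have := mul_le_mul_of_nonneg_left hlow' hp.le
          nlinarith [this, hmul]
        have hsq2 : Real.exp (-2*ε*t) = Real.exp (-ε*t) * Real.exp (-ε*t) := by
          rw [← Real.exp_add]; ring_nf
        rw [hsq2]
        have hΦn : (0:ℝ) ≤ ‖Φ t‖ := norm_nonneg _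
        rcases le_or_gt N (C₁ * Real.exp (-ε*t)) with hcase | hcase
        · nlinarith [mul_nonneg hp.le hΦn, mul_nonneg (mul_nonneg hp.le hΦn)
            (mul_nonneg hp.le hΦn), mul_nonneg hN0 hN0,
            mul_le_mul_of_nonneg_left hcase (by positivity : (0:ℝ) ≤ 2*N)]
        · have h1 : (0:ℝ) ≤ N - C₁ * Real.exp (-ε*t) := by linarith
          have h2 := mul_self_le_mul_self h1 hx
          nlinarith [sq_nonneg (C₁ * Real.exp (-ε*t))]
    have hIexp : (∫ t in Set.Ioc (0:ℝ) T, Real.exp (-ε*t)) ≤ 1/ε := by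
      have hd : ∀ t : ℝ, HasDerivAt (fun t : ℝ => -Real.exp (-ε*t)/ε) (Real.exp (-ε*t)) t := by
        intro t
        have h1 : HasDerivAt (fun t : ℝ => -ε*t) (-ε) t := by
          simpa using (hasDerivAt_id t).const_mul (-ε)
        have h2 := (Real.hasDerivAt_exp (-ε*t)).comp t h1
        have h3 := (h2.div_const ε).neg
        convert h3 using 1
        · rfl
        · rfl
        · ext x
          simp [Function.comp, neg_div]
        · rw [mul_neg, neg_div, neg_neg, mul_div_assoc, div_self hε.ne', mul_one]
      rw [← intervalIntegral.integral_of_le hT.le,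
        intervalIntegral.integral_eq_sub_of_hasDerivAt (fun t _ => hd t)
          ((Real.continuous_exp.comp (continuous_const.mul continuous_id)).intervalIntegrable 0 T)]
      have he1 := Real.exp_pos (-ε*T)
      have he2 : Real.exp (-ε*0) = 1 := by norm_num
      rw [he2]
      have heq : -Real.exp (-ε*T)/ε - -1/ε = (1 - Real.exp (-ε*T))/ε := by ring
      rw [heq, div_le_div_iff_of_pos_right hε]
      nlinarith
    have hcompute : (∫ t in Set.Ioc (0:ℝ) T, (N^2 - (2*N*C₁) * Real.exp (-ε*t)))
        = N^2*T - (2*N*C₁) * ∫ t in Set.Ioc (0:ℝ) T, Real.exp (-ε*t) := by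
      have hi1 : IntegrableOn (fun _ : ℝ => N^2) (Set.Ioc (0:ℝ) T) volume :=
        integrableOn_const measure_Ioc_lt_top.ne
      have hi2 : IntegrableOn (fun t : ℝ => (2*N*C₁) * Real.exp (-ε*t)) (Set.Ioc (0:ℝ) T)
          volume := (Continuous.integrableOn_Ioc
            (Real.continuous_exp.comp (continuous_const.mul continuous_id))).const_mul _
      rw [integral_sub hi1 hi2, setIntegral_const, integral_const_mul, measureReal_def, Real.volume_Ioc,
        sub_zero, ENNReal.toReal_ofReal hT.le, smul_eq_mul, mul_comm]
    have hInonneg : (0:ℝ) ≤ ∫ t in Set.Ioc (0:ℝ) T, Real.exp (-ε*t) :=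
      setIntegral_nonneg measurableSet_Ioc (fun t _ => (Real.exp_pos _).le)
    have hfinal := le_trans hchain2 (le_trans hchain1 hmain)
    rw [hcompute] at hfinal
    have hIbound : (2*N*C₁) * (∫ t in Set.Ioc (0:ℝ) T, Real.exp (-ε*t)) ≤ 2*N*C₁ * (1/ε) :=
      mul_le_mul_of_nonneg_left hIexp (by positivity)
    nlinarith [hfinal, hIbound]
  have hsq : N^2 ≤ (2*a*‖h₀‖)^2 := by
    by_contra hcon
    push_neg at hcon
    set B : ℝ := 2*N*C₁ * (1/ε) with hBdef
    have hB0 : 0 ≤ B := by positivity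
    set δ : ℝ := N^2 - (2*a*‖h₀‖)^2 with hδdef
    have hδ : 0 < δ := by rw [hδdef]; linarith
    have hTpos : 0 < B/δ + 1 := by positivity
    have hk := key (B/δ + 1) hTpos
    have hcancel : δ * (B/δ) = B := by
      field_simp
    nlinarith [hk, hcancel]
  have := Real.sqrt_le_sqrt hsq
  rwa [Real.sqrt_sq hN0, Real.sqrt_sq (by positivity)] at this
end
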